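/- Let f belong to (an equivalence class in) L^1(P̃_X) and let h be a linear game value whose coefficients w_i(S,N) are nonnegative and satisfy Σ_{S⊆N∖{i}} w_i(S,N) = 1. Then for P_X-almost every x* ∈ ℝ^n and every i ∈ N, the marginal game value admits the integral representation h_i[N, v^{ME}(·; x*, X, f)] = ∫ Δ_i(S, x; x*, f) [P_i^{(h)} ⊗ P_X](dS, dx), where Δ_i(S,x; x*,f) := f(x*_{S∪{i}}, x_{-(S∪{i})}) − f(x*_S, x_{-S}). -/

import Mathlib

/-!
Each `P_{X_S} ⊗ P_{X_{-S}}` is at most `2^n P̃_X`, so `f ∈ L¹(P̃_X)` makes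
`(x*, x) ↦ f(x*_S, x_{-S})` integrable for `P_X ⊗ P_X`, and by Fubini `f(x*_S, ·)` is
`P_X`-integrable for almost every `x*`, simultaneously for the finitely many `S`. For such `x*`
the integral against `P_i^{(h)} ⊗ P_X` splits into the finite weighted sum of `P_X`-integrals
that defines the game value.
-/

open MeasureTheory ProbabilityTheory ENNReal Filter Finset

noncomputable section

/-- Discrete σ-algebra on the (finite) space of coalitions. -/
instance {k : ℕ} : MeasurableSpace (Finset (Fin k)) := ⊤

/-- `merge n S y x` is the vector in `ℝ^n` agreeing with `y` on `S` and with `x` on `N∖S`,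
i.e. the vector `(y_S, x_{-S})`. -/
def merge (n : ℕ) (S : Finset (Fin n)) (y x : Fin n → ℝ) : Fin n → ℝ :=
  fun i => if i ∈ S then y i else x i

/-- The product measure `P_{X_S} ⊗ P_{X_{-S}}` viewed as a measure on `ℝ^n`
(obtained by merging two independent copies along `S`). -/
def prodPart (n : ℕ) (P : Measure (Fin n → ℝ)) (S : Finset (Fin n)) :
    Measure (Fin n → ℝ) :=
  (P.prod P).map (fun q => merge n S q.1 q.2)

/-- The mixture measure `P̃_X = 2^{-n} ∑_{S ⊆ N} P_{X_S} ⊗ P_{X_{-S}}` on `ℝ^n`. -/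
def tildeP (n : ℕ) (P : Measure (Fin n → ℝ)) : Measure (Fin n → ℝ) :=
  ((2 : ℝ≥0∞) ^ n)⁻¹ • ∑ S : Finset (Fin n), prodPart n P S

/-- The marginal game `v^{ME}(S; x*, X, f) = E[f(x*_S, X_{-S})]`. -/
def vME (n : ℕ) (P : Measure (Fin n → ℝ)) (f : (Fin n → ℝ) → ℝ)
    (xs : Fin n → ℝ) (S : Finset (Fin n)) : ℝ :=
  ∫ x, f (merge n S xs x) ∂P

/-- A linear game value `h_i[N,v] = ∑_{S ⊆ N∖{i}} w(S) (v(S∪{i}) - v(S))`. -/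
def gameValue (n : ℕ) (w : Finset (Fin n) → ℝ) (i : Fin n)
    (v : Finset (Fin n) → ℝ) : ℝ :=
  ∑ S ∈ (univ.erase i).powerset, w S * (v (insert i S) - v S)

/-- The discrete measure on subsets of `D` assigning mass `w T` to each `T ⊆ D`.
For `D = N∖{i}` and nonnegative weights summing to one this is `P_i^{(h)}`. -/
def subsetMeasure (k : ℕ) (D : Finset (Fin k)) (w : Finset (Fin k) → ℝ) :
    Measure (Finset (Fin k)) :=
  ∑ T ∈ D.powerset, (ENNReal.ofReal (w T)) • Measure.dirac T

/-- `Δ_i(S, x; x*, f) = f(x*_{S∪{i}}, x_{-(S∪{i})}) - f(x*_S, x_{-S})`. -/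
def deltaFun (n : ℕ) (f : (Fin n → ℝ) → ℝ) (i : Fin n) (xs : Fin n → ℝ) :
    Finset (Fin n) × (Fin n → ℝ) → ℝ :=
  fun q => f (merge n (insert i q.1) xs q.2) - f (merge n q.1 xs q.2)

theorem MeasureTheory.Measure.finsetSum_prod {α β ι : Type*} [MeasurableSpace α]
    [MeasurableSpace β] (s : Finset ι) (μ : ι → Measure α) (ν : Measure β) [SFinite ν] :
    (∑ i ∈ s, μ i).prod ν = ∑ i ∈ s, (μ i).prod ν := by
  ext t ht
  simp only [Measure.prod_apply ht, lintegral_finsetSum_measure, Measure.finsetSum_apply]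

theorem measurable_merge (n : ℕ) (S : Finset (Fin n)) :
    Measurable (fun q : (Fin n → ℝ) × (Fin n → ℝ) => merge n S q.1 q.2) := by
  refine measurable_pi_lambda _ fun i => ?_
  by_cases hi : i ∈ S <;> simp only [merge, hi, if_true, if_false] <;> fun_prop

theorem prodPart_le_smul_tildeP (n : ℕ) (P : Measure (Fin n → ℝ)) (S : Finset (Fin n)) :
    prodPart n P S ≤ (2 : ℝ≥0∞) ^ n • tildeP n P := by
  have h2n : (2 : ℝ≥0∞) ^ n ≠ 0 := pow_ne_zero _ two_ne_zero
  have h2n' : (2 : ℝ≥0∞) ^ n ≠ ∞ := pow_ne_top ofNat_ne_top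
  rw [tildeP, smul_smul, ENNReal.mul_inv_cancel h2n h2n', one_smul]
  exact Finset.single_le_sum (f := prodPart n P) (fun _ _ => Measure.zero_le _) (mem_univ S)

theorem integrable_comp_merge_of_memLp_tildeP {n : ℕ} {P : Measure (Fin n → ℝ)}
    {f : (Fin n → ℝ) → ℝ} (hf : MemLp f 1 (tildeP n P)) (S : Finset (Fin n)) :
    Integrable (fun q : (Fin n → ℝ) × (Fin n → ℝ) => f (merge n S q.1 q.2)) (P.prod P) := by
  have hS : Integrable f (prodPart n P S) :=
    ((memLp_one_iff_integrable.mp hf).smul_measure (pow_ne_top ofNat_ne_top)).mono_measure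
      (prodPart_le_smul_tildeP n P S)
  exact (integrable_map_measure hS.aestronglyMeasurable
    (measurable_merge n S).aemeasurable).mp hS

theorem ae_integrable_comp_merge_of_memLp_tildeP {n : ℕ} {P : Measure (Fin n → ℝ)}
    [SFinite P] {f : (Fin n → ℝ) → ℝ} (hf : MemLp f 1 (tildeP n P)) :
    ∀ᵐ xs ∂P, ∀ S : Finset (Fin n), Integrable (fun x => f (merge n S xs x)) P :=
  ae_all_iff.mpr fun S => (integrable_comp_merge_of_memLp_tildeP hf S).prod_right_ae

theorem integral_subsetMeasure_prod {k : ℕ} {α : Type*} [MeasurableSpace α]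
    (D : Finset (Fin k)) {w : Finset (Fin k) → ℝ} (hw : ∀ T ∈ D.powerset, 0 ≤ w T)
    (μ : Measure α) [SFinite μ] {g : Finset (Fin k) × α → ℝ}
    (hg : ∀ T ∈ D.powerset, Integrable (fun x => g (T, x)) μ) :
    ∫ q, g q ∂(subsetMeasure k D w).prod μ = ∑ T ∈ D.powerset, w T * ∫ x, g (T, x) ∂μ := by
  have hmk : ∀ T : Finset (Fin k), MeasurableEmbedding (Prod.mk T : α → Finset (Fin k) × α) :=
    measurableEmbedding_prodMk_left
  simp only [subsetMeasure, Measure.finsetSum_prod, Measure.prod_smul_left, Measure.dirac_prod]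
  rw [integral_finsetSum_measure fun T hT =>
    ((hmk T).integrable_map_iff.mpr (hg T hT)).smul_measure ofReal_ne_top]
  refine Finset.sum_congr rfl fun T hT => ?_
  rw [integral_smul_measure, (hmk T).integral_map, toReal_ofReal (hw T hT), smul_eq_mul]

theorem stmt6_general (n : ℕ) (P : Measure (Fin n → ℝ)) [IsProbabilityMeasure P]
    (f : (Fin n → ℝ) → ℝ) (hf : MemLp f 1 (tildeP n P))
    (w : Fin n → Finset (Fin n) → ℝ)
    (hw0 : ∀ i : Fin n, ∀ S ∈ (univ.erase i).powerset, 0 ≤ w i S) :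
    ∀ᵐ xs ∂P, ∀ i : Fin n,
      gameValue n (w i) i (vME n P f xs) =
        ∫ q, deltaFun n f i xs q
          ∂((subsetMeasure n (univ.erase i) (w i)).prod P) := by
  filter_upwards [ae_integrable_comp_merge_of_memLp_tildeP hf] with xs hxs i
  rw [integral_subsetMeasure_prod _ (hw0 i) P fun T _ => (hxs (insert i T)).sub (hxs T)]
  refine Finset.sum_congr rfl fun T _ => ?_
  rw [vME, vME, ← integral_sub (hxs (insert i T)) (hxs T)]
  rfl

/-- Integral representation of marginal game values.
Let `f ∈ L¹(P̃_X)` and let the coefficients `w_i(S,N)` be nonnegative and sum to one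
over `S ⊆ N∖{i}`. Then for `P_X`-almost every `x*` and every `i ∈ N`,
`h_i[N, v^{ME}(·; x*, X, f)] = ∫ Δ_i(S, x; x*, f) [P_i^{(h)} ⊗ P_X](dS, dx)`. -/
theorem stmt6 (n : ℕ) (P : Measure (Fin n → ℝ)) [IsProbabilityMeasure P]
    (f : (Fin n → ℝ) → ℝ) (hf : MemLp f 1 (tildeP n P))
    (w : Fin n → Finset (Fin n) → ℝ)
    (hw0 : ∀ i : Fin n, ∀ S ∈ (univ.erase i).powerset, 0 ≤ w i S)
    (hw1 : ∀ i : Fin n, ∑ S ∈ (univ.erase i).powerset, w i S = 1) :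
    ∀ᵐ xs ∂P, ∀ i : Fin n,
      gameValue n (w i) i (vME n P f xs) =
        ∫ q, deltaFun n f i xs q
          ∂((subsetMeasure n (univ.erase i) (w i)).prod P) :=
  stmt6_general n P f hf w hw0
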